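/- arXiv:2203.16426 — 4 statements merged into one kernel-verified Lean document; each statement's English description precedes it below -/
import Mathlib

section
/- Let A, B, C : ℝ → ℝ satisfy the adjoint equations A' = B, B' = -A + u·C, C' = -u·B on an interval [a,b). If A(s) = 0 for all s in [a,b) and the Hamiltonian condition 1 + C(s) + u(s)·A(s) = 0 holds on [a,b), then u(s) = 0 for all s in the interior of [a,b). -/
/-! Since `A ≡ 0` near every interior point, `B = A' ≡ 0` there and hence `B' ≡ 0`, so the
adjoint equation for `B` reduces to `u·C = 0`; the Hamiltonian condition with `A = 0` gives
`C = -1`, hence `u = 0`. -/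

open Set

theorem deriv_eq_zero_of_eqOn_zero {𝕜 F : Type*} [NontriviallyNormedField 𝕜]
    [NormedAddCommGroup F] [NormedSpace 𝕜 F] {f : 𝕜 → F} {U : Set 𝕜} {x : 𝕜}
    (hU : IsOpen U) (hf : EqOn f 0 U) (hx : x ∈ U) : deriv f x = 0 :=
  (Filter.eventuallyEq_of_mem (hU.mem_nhds hx) hf).deriv_eq.trans (deriv_const x 0)

theorem stmt_3_general (A B C u : ℝ → ℝ) (a b : ℝ)
    (hA' : ∀ s ∈ Set.Ico a b, deriv A s = B s)
    (hB' : ∀ s ∈ Set.Ico a b, deriv B s = -A s + u s * C s)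
    (hA0 : ∀ s ∈ Set.Ico a b, A s = 0)
    (hH : ∀ s ∈ Set.Ico a b, 1 + C s + u s * A s = 0) :
    ∀ s ∈ Set.Ioo a b, u s = 0 := by
  have hA0' : EqOn A 0 (Ioo a b) := fun x hx => hA0 x (Ioo_subset_Ico_self hx)
  have hB0 : EqOn B 0 (Ioo a b) := fun x hx =>
    (hA' x (Ioo_subset_Ico_self hx)).symm.trans (deriv_eq_zero_of_eqOn_zero isOpen_Ioo hA0' hx)
  intro s hs
  have hs' : s ∈ Ico a b := Ioo_subset_Ico_self hs
  have huC : u s * C s = 0 := by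
    have h := hB' s hs'
    rw [deriv_eq_zero_of_eqOn_zero isOpen_Ioo hB0 hs, hA0 s hs'] at h
    linarith
  have hC : C s = -1 := by
    have h := hH s hs'
    rw [hA0 s hs', mul_zero] at h
    linarith
  simpa [hC] using huC

theorem stmt_3 (A B C u : ℝ → ℝ) (a b : ℝ) (hab : a < b)
    (hA : Differentiable ℝ A) (hB : Differentiable ℝ B) (hC : Differentiable ℝ C)
    (hu : Continuous u)
    (hA' : ∀ s ∈ Set.Ico a b, deriv A s = B s)
    (hB' : ∀ s ∈ Set.Ico a b, deriv B s = -A s + u s * C s)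
    (hC' : ∀ s ∈ Set.Ico a b, deriv C s = -(u s * B s))
    (hA0 : ∀ s ∈ Set.Ico a b, A s = 0)
    (hH : ∀ s ∈ Set.Ico a b, 1 + C s + u s * A s = 0) :
    ∀ s ∈ Set.Ioo a b, u s = 0 :=
  stmt_3_general A B C u a b hA' hB' hA0 hH
end

section
/- Let r ∈ (0,1), k_x = √(1-r²), k_z = r, and let Ω_L, Ω_R, u_L, u_R, e₂ be as in the appendix (so Ω_L·u_L = Ω_R·u_R = 0, Ω_L·u_R = -2k_x k_z e₂, Ω_R·u_L = 2k_x k_z e₂, Ω³ = -Ω for Ω ∈ {Ω_L, Ω_R}). Define R_L(θ) = exp(Ω_L θ), R_R(θ) = exp(Ω_R θ). Then for any φ ∈ ℝ: u_Rᵀ·Ω_L·R_R(π+φ)·u_L = -4 r² (1-r²) sin φ. -/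
open Matrix Real

/-! `Ω_R` is the cross-product matrix of a unit vector, so `Ω_R³ = -Ω_R`. Splitting the
exponential series into even and odd powers then gives Rodrigues' formula
`exp (θ Ω) = 1 + sin θ • Ω + (1 - cos θ) • Ω²`, and with `θ = π + φ` the claim becomes a
polynomial identity in `r` and `k_x`, closed by `k_x² = 1 - r²`. -/

section PowThreeEqNeg

variable {R : Type*} [Ring R] {Ω : R}

theorem pow_two_mul_add_one_of_pow_three_eq_neg (h : Ω ^ 3 = -Ω) (n : ℕ) :
    Ω ^ (2 * n + 1) = (-1) ^ n * Ω := by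
  induction n with
  | zero => simp
  | succ n ih =>
    rw [show 2 * (n + 1) + 1 = 2 * n + 1 + 2 by ring, pow_add, ih, mul_assoc, ← pow_succ' Ω 2, h,
      pow_succ, mul_neg_one, neg_mul, mul_neg]

theorem pow_two_mul_add_two_of_pow_three_eq_neg (h : Ω ^ 3 = -Ω) (n : ℕ) :
    Ω ^ (2 * n + 2) = (-1) ^ n * Ω ^ 2 := by
  rw [pow_succ, pow_two_mul_add_one_of_pow_three_eq_neg h, mul_assoc, ← sq]

end PowThreeEqNeg

section Rodrigues

open NormedSpace Nat

variable {𝔸 : Type*} [Ring 𝔸] [Algebra ℝ 𝔸] [TopologicalSpace 𝔸] [IsTopologicalRing 𝔸]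
  [ContinuousSMul ℝ 𝔸] [T2Space 𝔸] {Ω : 𝔸}

theorem exp_smul_eq_of_pow_three_eq_neg (h : Ω ^ 3 = -Ω) (θ : ℝ) :
    exp (θ • Ω) = 1 + sin θ • Ω + (1 - cos θ) • Ω ^ 2 := by
  set F : ℕ → 𝔸 := fun n => (n !⁻¹ : ℝ) • (θ • Ω) ^ n
  have hsign (n : ℕ) (x : 𝔸) : (-1 : 𝔸) ^ n * x = ((-1 : ℝ) ^ n) • x := by
    simp [Algebra.smul_def]
  have hodd : HasSum (fun n => F (2 * n + 1)) (sin θ • Ω) := by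
    refine ((Real.hasSum_sin θ).smul_const Ω).congr_fun fun n => ?_
    simp only [F, smul_pow, pow_two_mul_add_one_of_pow_three_eq_neg h, hsign, smul_smul]
    congr 1
    field_simp
  -- `F 0 = 1`, while `F (2 n) = -(n-th cosine term) • Ω²` only for `n ≥ 1`
  have heven : HasSum (fun n => F (2 * n)) ((1 + Ω ^ 2) - cos θ • Ω ^ 2) := by
    refine ((hasSum_ite_eq 0 (1 + Ω ^ 2)).sub
      ((Real.hasSum_cos θ).smul_const (Ω ^ 2))).congr_fun fun n => ?_
    cases n with
    | zero => simp [F]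
    | succ n =>
      simp only [F, smul_pow, pow_two_mul_add_two_of_pow_three_eq_neg h, hsign, smul_smul,
        mul_add_one]
      rw [if_neg n.succ_ne_zero, zero_sub, ← neg_smul]
      congr 1
      ring
  rw [exp_eq_tsum ℝ]
  change ∑' n, F n = _
  rw [(heven.even_add_odd hodd).tsum_eq]
  module

end Rodrigues

section SkewMatrix

variable {R : Type*} [CommRing R]

theorem skew_pow_three (a b c : R) :
    !![0, a, b; -a, 0, c; -b, -c, 0] ^ 3
      = -(a ^ 2 + b ^ 2 + c ^ 2) • !![0, a, b; -a, 0, c; -b, -c, 0] := by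
  ext i j
  fin_cases i <;> fin_cases j <;> simp [pow_succ, Matrix.mul_apply, Fin.sum_univ_three] <;> ring

/-- `Ω_R u_L` and `Ω_Lᵀ u_R` are both `-2 k r e₂`; `Ω_L u_R ⟂ u_L` and `e₂ ⬝ᵥ Ω_R e₂ = 0` kill
the other two terms. -/
theorem dotProduct_skew_mul_rodrigues_mulVec (k r s c : R) :
    ![-k, 0, r] ⬝ᵥ (!![0, r, 0; -r, 0, k; 0, -k, 0] *
      (1 + s • !![0, r, 0; -r, 0, -k; 0, k, 0] + c • !![0, r, 0; -r, 0, -k; 0, k, 0] ^ 2))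
        *ᵥ ![k, 0, r]
      = 4 * r ^ 2 * k ^ 2 * s := by
  simp [sq, Matrix.mulVec, dotProduct, Fin.sum_univ_three, Matrix.mul_apply, Matrix.one_apply]
  ring

end SkewMatrix

theorem stmt_11 (r : ℝ) (hr : r ∈ Set.Ioo (0:ℝ) 1) (φ : ℝ) :
    let kx : ℝ := Real.sqrt (1 - r ^ 2)
    let ΩL : Matrix (Fin 3) (Fin 3) ℝ := !![0, r, 0; -r, 0, kx; 0, -kx, 0]
    let ΩR : Matrix (Fin 3) (Fin 3) ℝ := !![0, r, 0; -r, 0, -kx; 0, kx, 0]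
    let uL : Fin 3 → ℝ := ![kx, 0, r]
    let uR : Fin 3 → ℝ := ![-kx, 0, r]
    let RL : ℝ → Matrix (Fin 3) (Fin 3) ℝ := fun θ => NormedSpace.exp (θ • ΩL)
    let RR : ℝ → Matrix (Fin 3) (Fin 3) ℝ := fun θ => NormedSpace.exp (θ • ΩR)
    uR ⬝ᵥ (ΩL * RR (π + φ)).mulVec uL = -(4 * r ^ 2 * (1 - r ^ 2)) * Real.sin φ := by
  intro kx ΩL ΩR uL uR _RL RR
  have hkx : kx ^ 2 = 1 - r ^ 2 := sq_sqrt (by nlinarith [hr.1, hr.2])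
  have hcube : ΩR ^ 3 = -ΩR := by
    convert skew_pow_three r 0 (-kx) using 1 <;> simp [ΩR, hkx]
  have hRR : RR (π + φ) = 1 + (-sin φ) • ΩR + (1 + cos φ) • ΩR ^ 2 := by
    simp only [RR]
    rw [exp_smul_eq_of_pow_three_eq_neg hcube, add_comm π, sin_add_pi, cos_add_pi, sub_neg_eq_add]
  rw [hRR, dotProduct_skew_mul_rodrigues_mulVec, hkx]
  ring
end

section
/- With the setup of the appendix (r ∈ (0,1), Ω_L, Ω_R, u_L, u_R, R_L, R_R as defined there), for any φ ∈ ℝ: u_Rᵀ·R_L(π+φ)·Ω_R·u_L = -4 r² (1-r²) sin φ. -/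
/-! `Ω_L` is the cross-product matrix of the unit vector `-u_L`, so `Ω_L³ = -Ω_L` and Rodrigues'
formula gives `R_L(θ) = 1 + sin θ Ω_L + (1 - cos θ) Ω_L²`. Both `Ω_R u_L` and `u_Rᵀ Ω_L` equal
`-2 r k_x e₂`; since `e₂` is orthogonal to `u_R` and `e₂ᵀ Ω_L e₂ = 0`, only the `sin θ` term
survives, leaving `sin (π + φ) · 4 r² k_x²`. -/

open Matrix Real NormedSpace

section Rodrigues

variable {𝔸 : Type*} [NormedRing 𝔸] [NormedAlgebra ℝ 𝔸] {x : 𝔸}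

theorem hasDerivAt_rodrigues (hx : x ^ 3 = -x) (t : ℝ) :
    HasDerivAt (fun t : ℝ => 1 + sin t • x + (1 - cos t) • x ^ 2)
      ((1 + sin t • x + (1 - cos t) • x ^ 2) * x) t := by
  have hsin := (hasDerivAt_sin t).smul_const x
  have hcos := ((hasDerivAt_cos t).const_sub 1).smul_const (x ^ 2)
  refine (((hasDerivAt_const t (1 : 𝔸)).add hsin).add hcos).congr_deriv ?_
  have hx' : x ^ 2 * x = -x := by rw [← pow_succ, hx]
  simp only [add_mul, one_mul, smul_mul_assoc, hx', ← pow_two]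
  module

/-- Rodrigues' rotation formula. -/
theorem exp_smul_of_pow_three_eq_neg [CompleteSpace 𝔸] (hx : x ^ 3 = -x) (θ : ℝ) :
    exp (θ • x) = 1 + sin θ • x + (1 - cos θ) • x ^ 2 := by
  set G : ℝ → 𝔸 := fun t => 1 + sin t • x + (1 - cos t) • x ^ 2
  set E : ℝ → 𝔸 := fun t => exp (t • -x)
  -- `G' = G x` and `E' = -x E`, so `G E` is constant.
  have hGE : ∀ t, HasDerivAt (fun t => G t * E t) 0 t := fun t => by
    convert (hasDerivAt_rodrigues hx t).mul (hasDerivAt_exp_smul_const' (-x) t) using 1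
    · rfl
    · rw [neg_mul, mul_neg, mul_assoc, add_neg_cancel]
  have hGE_eq_one : G θ * E θ = 1 := by
    simpa [G, E] using is_const_of_deriv_eq_zero (fun t => (hGE t).differentiableAt)
      (fun t => (hGE t).deriv) θ 0
  have hE_mul_exp : E θ * exp (θ • x) = 1 := by
    -- `exp_add_of_commute` would need `NormedAlgebra ℚ 𝔸`; the series has infinite radius over `ℝ`.
    have hball : ∀ y : 𝔸, y ∈ Metric.eball (0 : 𝔸) (expSeries ℝ 𝔸).radius := fun y => by
      simp [expSeries_radius_eq_top]
    rw [← exp_add_of_commute_of_mem_ball ((Commute.refl x).neg_left.smul_left θ |>.smul_right θ)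
      (hball _) (hball _)]
    simp
  calc exp (θ • x) = G θ * E θ * exp (θ • x) := by rw [hGE_eq_one, one_mul]
    _ = G θ := by rw [mul_assoc, hE_mul_exp, mul_one]

end Rodrigues

theorem crossProductMatrix_pow_three {R : Type*} [CommRing R] (a b c : R) :
    !![0, -c, b; c, 0, -a; -b, a, 0] ^ 3 =
      -(a ^ 2 + b ^ 2 + c ^ 2) • !![0, -c, b; c, 0, -a; -b, a, 0] := by
  ext i j
  fin_cases i <;> fin_cases j <;> simp [pow_succ, Matrix.mul_apply, Fin.sum_univ_succ] <;> ring

theorem stmt_12 (r : ℝ) (hr : r ∈ Set.Ioo (0:ℝ) 1) (φ : ℝ) :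
    let kx : ℝ := Real.sqrt (1 - r ^ 2)
    let ΩL : Matrix (Fin 3) (Fin 3) ℝ := !![0, r, 0; -r, 0, kx; 0, -kx, 0]
    let ΩR : Matrix (Fin 3) (Fin 3) ℝ := !![0, r, 0; -r, 0, -kx; 0, kx, 0]
    let uL : Fin 3 → ℝ := ![kx, 0, r]
    let uR : Fin 3 → ℝ := ![-kx, 0, r]
    let RL : ℝ → Matrix (Fin 3) (Fin 3) ℝ := fun θ => NormedSpace.exp (θ • ΩL)
    let RR : ℝ → Matrix (Fin 3) (Fin 3) ℝ := fun θ => NormedSpace.exp (θ • ΩR)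
    uR ⬝ᵥ (RL (π + φ) * ΩR).mulVec uL = -(4 * r ^ 2 * (1 - r ^ 2)) * Real.sin φ := by
  intro kx ΩL ΩR uL uR RL _
  have hkx : kx ^ 2 = 1 - r ^ 2 := sq_sqrt (by nlinarith [hr.1, hr.2])
  have hΩL : ΩL ^ 3 = -ΩL := by
    have h := crossProductMatrix_pow_three (-kx) 0 (-r)
    simp only [neg_neg, neg_zero, even_two, Even.neg_pow] at h
    rwa [show kx ^ 2 + 0 ^ 2 + r ^ 2 = 1 by rw [hkx]; ring, neg_one_smul] at h
  have hRL : RL (π + φ) = 1 + sin (π + φ) • ΩL + (1 - cos (π + φ)) • ΩL ^ 2 :=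
    letI := Matrix.linftyOpNormedRing (n := Fin 3) (α := ℝ)
    letI := Matrix.linftyOpNormedAlgebra (n := Fin 3) (R := ℝ) (α := ℝ)
    exp_smul_of_pow_three_eq_neg hΩL (π + φ)
  have hΩR_uL : ΩR *ᵥ uL = ![0, -(2 * r * kx), 0] := by
    ext i; fin_cases i <;> simp [ΩR, uL, mulVec, dotProduct, Fin.sum_univ_succ]; ring
  have huR_ΩL : uR ᵥ* ΩL = ![0, -(2 * r * kx), 0] := by
    ext i; fin_cases i <;> simp [ΩL, uR, vecMul, dotProduct, Fin.sum_univ_succ]; ring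
  calc uR ⬝ᵥ (RL (π + φ) * ΩR) *ᵥ uL
      = (uR ᵥ* (1 + sin (π + φ) • ΩL + (1 - cos (π + φ)) • ΩL ^ 2)) ⬝ᵥ
          ![0, -(2 * r * kx), 0] := by
        rw [← mulVec_mulVec, hΩR_uL, hRL, dotProduct_mulVec]
    _ = sin (π + φ) * (4 * r ^ 2 * kx ^ 2) := by
        rw [vecMul_add, vecMul_add, vecMul_one, vecMul_smul, vecMul_smul, pow_two,
          ← vecMul_vecMul, huR_ΩL]
        simp [ΩL, uR, dotProduct, Fin.sum_univ_succ]
        ring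
    _ = -(4 * r ^ 2 * (1 - r ^ 2)) * sin φ := by
        rw [add_comm π, sin_add_pi, hkx]
        ring
end

section
/- With the setup of the appendix, for every φ ∈ ℝ: u_Rᵀ·Ω_L·R_R(π+φ)·R_L(π+φ)·u_R = 4 r² (1-r²) sin φ · (1 - 2r²(1 + cos φ)), and u_Rᵀ·R_L(π+φ)·Ω_L·u_R = 4 r² (1-r²) sin φ. -/
/-!
A skew-symmetric 3 × 3 matrix `Ω` with unit axial vector satisfies `Ω³ = -Ω`, so its exponential
is given by Rodrigues' formula `exp (θ Ω) = 1 + sin θ • Ω + (1 - cos θ) • Ω²`. This holds for any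
`a` with `a³ = -a` in a real Banach algebra: `exp (-t a) * (1 + sin t • a + (1 - cos t) • a²)` has
zero derivative, and the Rodrigues expressions at `θ` and `-θ` are mutually inverse. With both
rotations in closed form, the two quantities are polynomials in `r`, `k_x`, `sin φ`, `cos φ`, and
the claimed identities hold modulo `k_x² = 1 - r²`.
-/

open Matrix Real

noncomputable def rodrigues {A : Type*} [Ring A] [Algebra ℝ A] (a : A) (θ : ℝ) : A :=
  1 + sin θ • a + (1 - cos θ) • (a * a)

section Rodrigues

variable {A : Type*} [NormedRing A] [NormedAlgebra ℝ A] {a : A}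

theorem hasDerivAt_rodrigues_s14 (a : A) (θ : ℝ) :
    HasDerivAt (rodrigues a) (cos θ • a + sin θ • (a * a)) θ := by
  have h := (((hasDerivAt_sin θ).smul_const a).const_add 1).add
    (((hasDerivAt_cos θ).const_sub 1).smul_const (a * a))
  rwa [neg_neg] at h

theorem rodrigues_neg_mul_rodrigues (h : a * a * a = -a) (θ : ℝ) :
    rodrigues a (-θ) * rodrigues a θ = 1 := by
  simp only [rodrigues, sin_neg, cos_neg, add_mul, mul_add, mul_one, one_mul,
    smul_mul_assoc, mul_smul_comm, ← mul_assoc, h, neg_mul, smul_neg]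
  match_scalars <;> linarith [sin_sq_add_cos_sq θ]

theorem exp_smul_eq_rodrigues [CompleteSpace A] (h : a * a * a = -a) (θ : ℝ) :
    NormedSpace.exp (θ • a) = rodrigues a θ := by
  have hderiv (t : ℝ) :
      HasDerivAt (fun s : ℝ ↦ NormedSpace.exp (s • -a) * rodrigues a s) 0 t := by
    have hflow : -a * rodrigues a t + (cos t • a + sin t • (a * a)) = 0 := by
      simp only [rodrigues, mul_add, neg_mul, mul_one, mul_smul_comm, h, ← mul_assoc]
      module
    have h' := (hasDerivAt_exp_smul_const (-a) t).mul (hasDerivAt_rodrigues_s14 a t)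
    rwa [mul_assoc, ← mul_add, hflow, mul_zero] at h'
  have hconst : NormedSpace.exp (θ • a) * rodrigues a (-θ) = 1 := by
    simpa [rodrigues] using is_const_of_deriv_eq_zero (fun t ↦ (hderiv t).differentiableAt)
      (fun t ↦ (hderiv t).deriv) (-θ) 0
  calc NormedSpace.exp (θ • a)
      = NormedSpace.exp (θ • a) * rodrigues a (-θ) * rodrigues a θ := by
        rw [mul_assoc, rodrigues_neg_mul_rodrigues h, mul_one]
    _ = rodrigues a θ := by rw [hconst, one_mul]

end Rodrigues

namespace Matrix

theorem exp_smul_eq_rodrigues {n : Type*} [Fintype n] [DecidableEq n]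
    {Ω : Matrix n n ℝ} (h : Ω * Ω * Ω = -Ω) (θ : ℝ) :
    NormedSpace.exp (θ • Ω) = rodrigues Ω θ := by
  open scoped Norms.Operator in exact _root_.exp_smul_eq_rodrigues h θ

variable {R : Type*} [CommRing R] [IsAddTorsionFree R] {Ω : Matrix (Fin 3) (Fin 3) R}

theorem mul_mul_self_of_transpose_eq_neg (h : Ωᵀ = -Ω) :
    Ω * Ω * Ω = -(Ω 0 1 ^ 2 + Ω 0 2 ^ 2 + Ω 1 2 ^ 2) • Ω := by
  have hskew (i j : Fin 3) : Ω j i = -Ω i j := congrFun (congrFun h i) j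
  have hdiag (i : Fin 3) : Ω i i = 0 := self_eq_neg.mp (hskew i i)
  have hΩ : Ω = !![0, Ω 0 1, Ω 0 2; -Ω 0 1, 0, Ω 1 2; -Ω 0 2, -Ω 1 2, 0] := by
    ext i j; fin_cases i <;> fin_cases j <;> simp [hdiag, hskew 0 1, hskew 0 2, hskew 1 2]
  generalize Ω 0 1 = a, Ω 0 2 = b, Ω 1 2 = c at hΩ
  subst hΩ
  ext i j; fin_cases i <;> fin_cases j <;> simp [mul_apply, Fin.sum_univ_three] <;> ring

theorem mul_mul_self_eq_neg_of_transpose_eq_neg (h : Ωᵀ = -Ω)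
    (hunit : Ω 0 1 ^ 2 + Ω 0 2 ^ 2 + Ω 1 2 ^ 2 = 1) : Ω * Ω * Ω = -Ω := by
  rw [mul_mul_self_of_transpose_eq_neg h, hunit, neg_one_smul]

end Matrix

theorem stmt_14 (r : ℝ) (hr : r ∈ Set.Ioo (0:ℝ) 1) (φ : ℝ) :
    let kx : ℝ := Real.sqrt (1 - r ^ 2)
    let ΩL : Matrix (Fin 3) (Fin 3) ℝ := !![0, r, 0; -r, 0, kx; 0, -kx, 0]
    let ΩR : Matrix (Fin 3) (Fin 3) ℝ := !![0, r, 0; -r, 0, -kx; 0, kx, 0]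
    let uL : Fin 3 → ℝ := ![kx, 0, r]
    let uR : Fin 3 → ℝ := ![-kx, 0, r]
    let RL : ℝ → Matrix (Fin 3) (Fin 3) ℝ := fun θ => NormedSpace.exp (θ • ΩL)
    let RR : ℝ → Matrix (Fin 3) (Fin 3) ℝ := fun θ => NormedSpace.exp (θ • ΩR)
    uR ⬝ᵥ (ΩL * RR (π + φ) * RL (π + φ)).mulVec uR
      = 4 * r ^ 2 * (1 - r ^ 2) * Real.sin φ * (1 - 2 * r ^ 2 * (1 + Real.cos φ)) ∧
    uR ⬝ᵥ (RL (π + φ) * ΩL).mulVec uR = 4 * r ^ 2 * (1 - r ^ 2) * Real.sin φ := by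
  intro kx ΩL ΩR _ uR RL RR
  have hkx : kx ^ 2 = 1 - r ^ 2 := sq_sqrt (by nlinarith [hr.1, hr.2])
  have hL : RL (π + φ) = rodrigues ΩL (π + φ) :=
    exp_smul_eq_rodrigues (mul_mul_self_eq_neg_of_transpose_eq_neg
      (by ext i j; fin_cases i <;> fin_cases j <;> simp [ΩL]) (by simp [ΩL, hkx])) _
  have hR : RR (π + φ) = rodrigues ΩR (π + φ) :=
    exp_smul_eq_rodrigues (mul_mul_self_eq_neg_of_transpose_eq_neg
      (by ext i j; fin_cases i <;> fin_cases j <;> simp [ΩR]) (by simp [ΩR, hkx])) _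
  rw [hL, hR, add_comm π φ]
  simp only [rodrigues, sin_add_pi, cos_add_pi, ΩL, ΩR, uR, dotProduct, mulVec, mul_apply,
    Matrix.add_apply, Matrix.smul_apply, one_apply, Fin.sum_univ_three, of_apply, cons_val_zero,
    cons_val_one, cons_val_two, head_cons, tail_cons, smul_eq_mul, Fin.reduceEq, ↓reduceIte]
  exact ⟨by linear_combination (4 * r ^ 2 * sin φ - 8 * r ^ 4 * sin φ * (1 + cos φ)) * hkx,
    by linear_combination 4 * r ^ 2 * sin φ * hkx⟩
end
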